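/- (Proposition 1, USFA generalisation bound) Let w' ∈ ℝ^d be a task, C ⊂ ℝ^d a finite set of policy descriptors, and for each z ∈ C let ψ^{π_z} be the successor features of π_z (an optimal policy for task z) and ψ̃(·,·,z) an approximation. Define the GPI policy π(s) ∈ argmax_a max_{z∈C} ψ̃(s,a,z)ᵀw'. Then ‖Q*_{w'} − Q^π_{w'}‖_∞ ≤ (2/(1−γ)) [ min_{z∈C} ‖φ‖_∞ ‖w' − z‖ + max_{z∈C} ‖w'‖ ‖ψ^{π_z} − ψ̃(·,·,z)‖_∞ ]. -/

import Mathlib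

open scoped RealInnerProductSpace

noncomputable section

variable {S A E : Type*}

/-- Expected value at step `n` of the (vector-valued) one-step function `f` along
trajectories that start with the state-action pair `(s, a)` and afterwards follow the
deterministic policy `π` in an MDP with transition kernel `p`. -/
def stepVal [Fintype S] [AddCommMonoid E] [Module ℝ E]
    (p : S → A → S → ℝ) (π : S → A) (f : S → A → S → E) : ℕ → S → A → E
  | 0, s, a => ∑ s' : S, p s a s' • f s a s'
  | n + 1, s, a => ∑ s' : S, p s a s' • stepVal p π f n s' (π s')

/-- Expected discounted sum of the one-step quantities `f` when following policy `π`
after starting with the pair `(s, a)`. -/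
def polVal [Fintype S] [NormedAddCommGroup E] [NormedSpace ℝ E]
    (p : S → A → S → ℝ) (γ : ℝ) (π : S → A) (f : S → A → S → E) (s : S) (a : A) : E :=
  ∑' n : ℕ, γ ^ n • stepVal p π f n s a

/-- Action-value function `Q^π` of policy `π` for the one-step reward `r`. -/
def Qpol [Fintype S] (p : S → A → S → ℝ) (γ : ℝ) (π : S → A)
    (r : S → A → S → ℝ) (s : S) (a : A) : ℝ :=
  polVal p γ π r s a

/-- Successor features of policy `π`: the expected discounted sum of feature vectors. -/
def SF [Fintype S] {d : ℕ} (p : S → A → S → ℝ) (γ : ℝ) (π : S → A)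
    (φ : S → A → S → EuclideanSpace ℝ (Fin d)) (s : S) (a : A) :
    EuclideanSpace ℝ (Fin d) :=
  polVal p γ π φ s a

/-- `p` is a probability transition kernel. -/
def IsKernel [Fintype S] (p : S → A → S → ℝ) : Prop :=
  (∀ s a s', 0 ≤ p s a s') ∧ ∀ s a, ∑ s' : S, p s a s' = 1

/-- Optimal action-value function, over deterministic stationary policies. -/
def Qstar [Fintype S] (p : S → A → S → ℝ) (γ : ℝ) (r : S → A → S → ℝ)
    (s : S) (a : A) : ℝ :=
  ⨆ π : S → A, Qpol p γ π r s a

/-- Reward linear in the features `φ` with task (weight) vector `w`. -/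
def rTask {d : ℕ} (φ : S → A → S → EuclideanSpace ℝ (Fin d))
    (w : EuclideanSpace ℝ (Fin d)) : S → A → S → ℝ :=
  fun s a s' => ⟪φ s a s', w⟫

end

/-!
Let z₀ ∈ C be the descriptor closest to w'. The rewards of tasks w' and z₀ differ by at most
‖φ‖∞ ‖w' - z₀‖, and a uniform change δ of the reward moves both `Qstar` and every `Qpol` by at
most δ / (1 - γ); as π_{z₀} is optimal for z₀ this gives
Q*_{w'} - Q^{π_{z₀}}_{w'} ≤ 2 ‖φ‖∞ ‖w' - z₀‖ / (1 - γ).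
Since Q^{π_z}_{w'} = ψ^{π_z}ᵀ w', the values ψ̃(·,·,z)ᵀ w' approximate Q^{π_z}_{w'} up to
ε = max_z ‖w'‖ ‖ψ^{π_z} - ψ̃(·,·,z)‖∞, and a policy greedy for their maximum loses at most
2ε / (1 - γ) against every π_z: by the Bellman equation the gap max_z Q^{π_z} - Q^π is at most
γ times its own maximum plus 2ε.
-/

lemma le_ciSup₂_of_finite {ι κ : Type*} [Finite ι] [Finite κ] (f : ι → κ → ℝ) (i : ι) (j : κ) :
    f i j ≤ ⨆ i, ⨆ j, f i j :=
  le_ciSup_of_le (Finite.bddAbove_range _) i (le_ciSup (Finite.bddAbove_range _) j)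

lemma le_ciSup₃_of_finite {ι κ μ : Type*} [Finite ι] [Finite κ] [Finite μ]
    (f : ι → κ → μ → ℝ) (i : ι) (j : κ) (k : μ) : f i j k ≤ ⨆ i, ⨆ j, ⨆ k, f i j k :=
  le_ciSup_of_le (Finite.bddAbove_range _) i (le_ciSup₂_of_finite (f i) j k)

namespace IsKernel

variable {S A E : Type*} [Fintype S] [NormedAddCommGroup E] [NormedSpace ℝ E]
  {p : S → A → S → ℝ}

lemma sum_mul_le (hp : IsKernel p) (s : S) (a : A) {g : S → ℝ} {c : ℝ}
    (hg : ∀ s', g s' ≤ c) : ∑ s', p s a s' * g s' ≤ c :=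
  calc ∑ s', p s a s' * g s' ≤ ∑ s', p s a s' * c :=
        Finset.sum_le_sum fun s' _ => mul_le_mul_of_nonneg_left (hg s') (hp.1 s a s')
    _ = c := by rw [← Finset.sum_mul, hp.2 s a, one_mul]

lemma norm_sum_smul_le (hp : IsKernel p) (s : S) (a : A) {g : S → E} {c : ℝ}
    (hg : ∀ s', ‖g s'‖ ≤ c) : ‖∑ s', p s a s' • g s'‖ ≤ c :=
  calc ‖∑ s', p s a s' • g s'‖ ≤ ∑ s', p s a s' * ‖g s'‖ := by
        refine (norm_sum_le _ _).trans_eq (Finset.sum_congr rfl fun s' _ => ?_)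
        rw [norm_smul, Real.norm_of_nonneg (hp.1 s a s')]
    _ ≤ c := hp.sum_mul_le s a hg

end IsKernel

lemma exists_forall_norm_le {S A E : Type*} [Finite S] [Finite A] [Norm E]
    (f : S → A → S → E) : ∃ B, ∀ s a s', ‖f s a s'‖ ≤ B := by
  obtain ⟨B, hB⟩ := Finite.bddAbove_range fun x : S × A × S => ‖f x.1 x.2.1 x.2.2‖
  exact ⟨B, fun s a s' => hB ⟨(s, a, s'), rfl⟩⟩

section PolicyValue

variable {S A E : Type*} [Fintype S] [NormedAddCommGroup E] [NormedSpace ℝ E]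
  {p : S → A → S → ℝ} {γ : ℝ}

lemma norm_stepVal_le (hp : IsKernel p) (π : S → A) {f : S → A → S → E} {B : ℝ}
    (hB : ∀ s a s', ‖f s a s'‖ ≤ B) (n : ℕ) (s : S) (a : A) :
    ‖stepVal p π f n s a‖ ≤ B := by
  induction n generalizing s a with
  | zero => exact hp.norm_sum_smul_le s a (hB s a)
  | succ n ih => exact hp.norm_sum_smul_le s a fun s' => ih s' (π s')

lemma norm_pow_smul_stepVal_le (hp : IsKernel p) (hγ0 : 0 ≤ γ) (π : S → A)
    {f : S → A → S → E} {B : ℝ} (hB : ∀ s a s', ‖f s a s'‖ ≤ B) (n : ℕ) (s : S) (a : A) :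
    ‖γ ^ n • stepVal p π f n s a‖ ≤ B * γ ^ n := by
  rw [norm_smul, Real.norm_of_nonneg (pow_nonneg hγ0 n), mul_comm]
  exact mul_le_mul_of_nonneg_right (norm_stepVal_le hp π hB n s a) (pow_nonneg hγ0 n)

lemma norm_polVal_le (hp : IsKernel p) (hγ0 : 0 ≤ γ) (hγ1 : γ < 1) (π : S → A)
    {f : S → A → S → E} {B : ℝ} (hB : ∀ s a s', ‖f s a s'‖ ≤ B) (s : S) (a : A) :
    ‖polVal p γ π f s a‖ ≤ B / (1 - γ) :=
  tsum_of_norm_bounded ((hasSum_geometric_of_lt_one hγ0 hγ1).mul_left B)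
    fun n => norm_pow_smul_stepVal_le hp hγ0 π hB n s a

lemma summable_pow_smul_stepVal [Finite A] [CompleteSpace E] (hp : IsKernel p) (hγ0 : 0 ≤ γ)
    (hγ1 : γ < 1) (π : S → A) (f : S → A → S → E) (s : S) (a : A) :
    Summable fun n : ℕ => γ ^ n • stepVal p π f n s a := by
  obtain ⟨B, hB⟩ := exists_forall_norm_le f
  exact .of_norm_bounded ((summable_geometric_of_lt_one hγ0 hγ1).mul_left B)
    fun n => norm_pow_smul_stepVal_le hp hγ0 π hB n s a

lemma stepVal_sub (π : S → A) (f g : S → A → S → E) (n : ℕ) (s : S) (a : A) :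
    stepVal p π (f - g) n s a = stepVal p π f n s a - stepVal p π g n s a := by
  induction n generalizing s a with
  | zero => simp [stepVal, smul_sub, Finset.sum_sub_distrib]
  | succ n ih => simp [stepVal, ih, smul_sub, Finset.sum_sub_distrib]

lemma polVal_sub [Finite A] [CompleteSpace E] (hp : IsKernel p) (hγ0 : 0 ≤ γ) (hγ1 : γ < 1)
    (π : S → A) (f g : S → A → S → E) (s : S) (a : A) :
    polVal p γ π (f - g) s a = polVal p γ π f s a - polVal p γ π g s a := by
  simp only [polVal, stepVal_sub, smul_sub]
  exact (summable_pow_smul_stepVal hp hγ0 hγ1 π f s a).tsum_sub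
    (summable_pow_smul_stepVal hp hγ0 hγ1 π g s a)

lemma stepVal_map {F : Type*} [NormedAddCommGroup F] [NormedSpace ℝ F] (π : S → A)
    (L : E →L[ℝ] F) (f : S → A → S → E) (n : ℕ) (s : S) (a : A) :
    stepVal p π (fun s a s' => L (f s a s')) n s a = L (stepVal p π f n s a) := by
  induction n generalizing s a with
  | zero => simp [stepVal]
  | succ n ih => simp [stepVal, ih]

lemma polVal_map [Finite A] [CompleteSpace E] {F : Type*} [NormedAddCommGroup F]
    [NormedSpace ℝ F] (hp : IsKernel p) (hγ0 : 0 ≤ γ) (hγ1 : γ < 1) (π : S → A)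
    (L : E →L[ℝ] F) (f : S → A → S → E) (s : S) (a : A) :
    polVal p γ π (fun s a s' => L (f s a s')) s a = L (polVal p γ π f s a) := by
  simp only [polVal, stepVal_map, ← L.map_smul]
  exact (L.map_tsum (summable_pow_smul_stepVal hp hγ0 hγ1 π f s a)).symm

lemma polVal_bellman [Finite A] [CompleteSpace E] (hp : IsKernel p) (hγ0 : 0 ≤ γ)
    (hγ1 : γ < 1) (π : S → A) (f : S → A → S → E) (s : S) (a : A) :
    polVal p γ π f s a = ∑ s', p s a s' • f s a s'
      + γ • ∑ s', p s a s' • polVal p γ π f s' (π s') := by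
  have hsum := summable_pow_smul_stepVal hp hγ0 hγ1 π f
  rw [polVal, (hsum s a).tsum_eq_zero_add]
  simp only [pow_zero, one_smul, stepVal, Finset.smul_sum, polVal, ← tsum_const_smul'']
  congr 1
  rw [← (Summable.tsum_finsetSum fun s' _ => ((hsum s' (π s')).const_smul _).const_smul _)]
  congr 1 with n
  refine Finset.sum_congr rfl fun s' _ => ?_
  simp only [smul_smul, pow_succ']
  congr 1
  ring

end PolicyValue

section ActionValue

variable {S A : Type*} [Fintype S] [Finite A] {p : S → A → S → ℝ} {γ : ℝ}

lemma Qpol_bellman (hp : IsKernel p) (hγ0 : 0 ≤ γ) (hγ1 : γ < 1) (π : S → A)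
    (r : S → A → S → ℝ) (s : S) (a : A) :
    Qpol p γ π r s a = ∑ s', p s a s' * r s a s'
      + γ * ∑ s', p s a s' * Qpol p γ π r s' (π s') :=
  polVal_bellman hp hγ0 hγ1 π r s a

lemma abs_Qpol_sub_Qpol_le (hp : IsKernel p) (hγ0 : 0 ≤ γ) (hγ1 : γ < 1) (π : S → A)
    {r r' : S → A → S → ℝ} {B : ℝ} (hB : ∀ s a s', |r s a s' - r' s a s'| ≤ B)
    (s : S) (a : A) : |Qpol p γ π r s a - Qpol p γ π r' s a| ≤ B / (1 - γ) := by
  rw [Qpol, Qpol, ← polVal_sub hp hγ0 hγ1]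
  exact norm_polVal_le (f := r - r') hp hγ0 hγ1 π hB s a

lemma Qpol_le_Qstar (p : S → A → S → ℝ) (γ : ℝ) (r : S → A → S → ℝ) (π : S → A)
    (s : S) (a : A) : Qpol p γ π r s a ≤ Qstar p γ r s a :=
  le_ciSup (Finite.bddAbove_range fun π' => Qpol p γ π' r s a) π

lemma Qstar_le_Qstar_add (hp : IsKernel p) (hγ0 : 0 ≤ γ) (hγ1 : γ < 1)
    {r r' : S → A → S → ℝ} {B : ℝ} (hB : ∀ s a s', |r s a s' - r' s a s'| ≤ B)
    (s : S) (a : A) : Qstar p γ r s a ≤ Qstar p γ r' s a + B / (1 - γ) := by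
  have : Nonempty (S → A) := ⟨fun _ => a⟩
  refine ciSup_le fun π => ?_
  linarith [(abs_le.1 (abs_Qpol_sub_Qpol_le hp hγ0 hγ1 π hB s a)).2,
    Qpol_le_Qstar p γ r' π s a]

lemma Qpol_rTask (hp : IsKernel p) (hγ0 : 0 ≤ γ) (hγ1 : γ < 1) (π : S → A) {d : ℕ}
    (φ : S → A → S → EuclideanSpace ℝ (Fin d)) (w : EuclideanSpace ℝ (Fin d))
    (s : S) (a : A) : Qpol p γ π (rTask φ w) s a = ⟪SF p γ π φ s a, w⟫ := by
  have hr : rTask φ w = fun s a s' => innerSL ℝ w (φ s a s') := by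
    ext; simp [rTask, real_inner_comm]
  rw [Qpol, hr, polVal_map hp hγ0 hγ1, innerSL_apply_apply, real_inner_comm, SF]

lemma abs_Qpol_rTask_sub_inner_le (hp : IsKernel p) (hγ0 : 0 ≤ γ) (hγ1 : γ < 1) (π : S → A)
    {d : ℕ} (φ : S → A → S → EuclideanSpace ℝ (Fin d)) (w : EuclideanSpace ℝ (Fin d))
    (ψ : S → A → EuclideanSpace ℝ (Fin d)) (s : S) (a : A) :
    |Qpol p γ π (rTask φ w) s a - ⟪ψ s a, w⟫| ≤ ‖w‖ * ⨆ s, ⨆ a, ‖SF p γ π φ s a - ψ s a‖ := by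
  rw [Qpol_rTask hp hγ0 hγ1, ← inner_sub_left, mul_comm]
  exact (abs_real_inner_le_norm _ _).trans (mul_le_mul_of_nonneg_right
    (le_ciSup₂_of_finite (fun s a => ‖SF p γ π φ s a - ψ s a‖) s a) (norm_nonneg w))

end ActionValue

lemma abs_rTask_sub_rTask_le {S A : Type*} [Finite S] [Finite A] {d : ℕ}
    (φ : S → A → S → EuclideanSpace ℝ (Fin d)) (w z : EuclideanSpace ℝ (Fin d))
    (s : S) (a : A) (s' : S) :
    |rTask φ w s a s' - rTask φ z s a s'| ≤ (⨆ s, ⨆ a, ⨆ s', ‖φ s a s'‖) * ‖w - z‖ := by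
  rw [rTask, rTask, ← inner_sub_right]
  exact (abs_real_inner_le_norm _ _).trans (mul_le_mul_of_nonneg_right
    (le_ciSup₃_of_finite (fun s a s' => ‖φ s a s'‖) s a s') (norm_nonneg _))

lemma le_div_one_sub_of_le_mul_iSup_add {X : Type*} [Finite X] {g : X → ℝ} {γ c : ℝ}
    (hγ1 : γ < 1) (hg : ∀ x, g x ≤ γ * (⨆ y, g y) + c) (x : X) : g x ≤ c / (1 - γ) := by
  have : Nonempty X := ⟨x⟩
  have hsup : (⨆ y, g y) ≤ γ * (⨆ y, g y) + c := ciSup_le hg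
  calc g x ≤ ⨆ y, g y := le_ciSup (Finite.bddAbove_range g) x
    _ ≤ c / (1 - γ) := by rw [le_div_iff₀ (by linarith)]; linarith

theorem Qpol_sub_Qpol_le_of_greedy {S A ι : Type*} [Fintype S] [Finite A]
    {p : S → A → S → ℝ} {γ : ℝ} (hp : IsKernel p) (hγ0 : 0 ≤ γ) (hγ1 : γ < 1)
    (r : S → A → S → ℝ) {C : Finset ι} (hC : C.Nonempty) (σ : ι → S → A)
    (Q : ι → S → A → ℝ) {ε : ℝ} (hQ : ∀ i ∈ C, ∀ s a, |Qpol p γ (σ i) r s a - Q i s a| ≤ ε)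
    {π : S → A} (hπ : ∀ s a, C.sup' hC (fun i => Q i s a) ≤ C.sup' hC fun i => Q i s (π s))
    {i : ι} (hi : i ∈ C) (s : S) (a : A) :
    Qpol p γ (σ i) r s a - Qpol p γ π r s a ≤ 2 * ε / (1 - γ) := by
  let Qmax (s : S) (a : A) : ℝ := C.sup' hC fun j => Qpol p γ (σ j) r s a
  let gap (x : S × A) : ℝ := Qmax x.1 x.2 - Qpol p γ π r x.1 x.2
  have hε : 0 ≤ ε := (abs_nonneg _).trans (hQ i hi s a)
  have hstep : ∀ s', ∀ j ∈ C, Qpol p γ (σ j) r s' (σ j s') - Qpol p γ π r s' (π s')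
      ≤ (⨆ x, gap x) + 2 * ε := by
    intro s' j hj
    have hQmax : C.sup' hC (fun k => Q k s' (π s')) ≤ Qmax s' (π s') + ε :=
      Finset.sup'_le _ _ fun k hk => by
        linarith [(abs_le.1 (hQ k hk s' (π s'))).1,
          Finset.le_sup' (fun k => Qpol p γ (σ k) r s' (π s')) hk]
    have hgap : gap (s', π s') ≤ ⨆ x, gap x := le_ciSup (Finite.bddAbove_range gap) _
    linarith [(abs_le.1 (hQ j hj s' (σ j s'))).2, hπ s' (σ j s'),
      Finset.le_sup' (fun k => Q k s' (σ j s')) hj]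
  have hcontract : ∀ x, gap x ≤ γ * (⨆ x, gap x) + 2 * ε := by
    rintro ⟨s, a⟩
    obtain ⟨j, hj, hjmax⟩ := Finset.exists_mem_eq_sup' hC fun j => Qpol p γ (σ j) r s a
    calc gap (s, a) = γ * ∑ s', p s a s' *
          (Qpol p γ (σ j) r s' (σ j s') - Qpol p γ π r s' (π s')) := by
          simp only [gap, Qmax, hjmax]
          rw [Qpol_bellman hp hγ0 hγ1, Qpol_bellman hp hγ0 hγ1 π]
          simp only [mul_sub, Finset.sum_sub_distrib]
          ring
      _ ≤ γ * ((⨆ x, gap x) + 2 * ε) :=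
          mul_le_mul_of_nonneg_left (hp.sum_mul_le s a fun s' => hstep s' j hj) hγ0
      _ ≤ γ * (⨆ x, gap x) + 2 * ε := by nlinarith
  linarith [le_div_one_sub_of_le_mul_iSup_add hγ1 hcontract (s, a),
    Finset.le_sup' (fun j => Qpol p γ (σ j) r s a) hi]

theorem statement4_general {S A : Type*} [Fintype S] [Fintype A]
    {d : ℕ} (p : S → A → S → ℝ) (hp : IsKernel p)
    (γ : ℝ) (hγ0 : 0 ≤ γ) (hγ1 : γ < 1)
    (φ : S → A → S → EuclideanSpace ℝ (Fin d)) (w' : EuclideanSpace ℝ (Fin d))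
    (C : Finset (EuclideanSpace ℝ (Fin d))) (hC : C.Nonempty)
    (πz : EuclideanSpace ℝ (Fin d) → S → A)
    (hopt : ∀ z ∈ C, ∀ s a, Qpol p γ (πz z) (rTask φ z) s a = Qstar p γ (rTask φ z) s a)
    (ψt : EuclideanSpace ℝ (Fin d) → S → A → EuclideanSpace ℝ (Fin d))
    (π : S → A)
    (hGPI : ∀ s a, (C.sup' hC fun z => ⟪ψt z s a, w'⟫) ≤
      C.sup' hC fun z => ⟪ψt z s (π s), w'⟫) :
    ∀ s a, |Qstar p γ (rTask φ w') s a - Qpol p γ π (rTask φ w') s a| ≤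
      2 / (1 - γ) *
        ((C.inf' hC fun z => (⨆ s, ⨆ a, ⨆ s', ‖φ s a s'‖) * ‖w' - z‖) +
          C.sup' hC fun z =>
            ‖w'‖ * (⨆ s, ⨆ a, ‖SF p γ (πz z) φ s a - ψt z s a‖)) := by
  intro s a
  set Φ := ⨆ s, ⨆ a, ⨆ s', ‖φ s a s'‖
  set ε := C.sup' hC fun z => ‖w'‖ * (⨆ s, ⨆ a, ‖SF p γ (πz z) φ s a - ψt z s a‖)
  obtain ⟨z₀, hz₀, hz₀min⟩ := Finset.exists_mem_eq_inf' hC fun z => Φ * ‖w' - z‖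
  have hreward := abs_rTask_sub_rTask_le φ w' z₀
  have hSF : ∀ z ∈ C, ∀ s a, |Qpol p γ (πz z) (rTask φ w') s a - ⟪ψt z s a, w'⟫| ≤ ε :=
    fun z hz s a => (abs_Qpol_rTask_sub_inner_le hp hγ0 hγ1 _ φ w' (ψt z) s a).trans
      (Finset.le_sup' (fun z => ‖w'‖ * ⨆ s, ⨆ a, ‖SF p γ (πz z) φ s a - ψt z s a‖) hz)
  have hstar := Qstar_le_Qstar_add hp hγ0 hγ1 hreward s a
  have htransfer := (abs_le.1 (abs_Qpol_sub_Qpol_le hp hγ0 hγ1 (πz z₀) hreward s a)).1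
  have himprove := Qpol_sub_Qpol_le_of_greedy hp hγ0 hγ1 (rTask φ w') hC πz
    (fun z s a => ⟪ψt z s a, w'⟫) hSF hGPI hz₀ s a
  rw [abs_of_nonneg (sub_nonneg.2 (Qpol_le_Qstar p γ _ π s a)), hz₀min]
  calc Qstar p γ (rTask φ w') s a - Qpol p γ π (rTask φ w') s a
      ≤ Φ * ‖w' - z₀‖ / (1 - γ) + Φ * ‖w' - z₀‖ / (1 - γ) + 2 * ε / (1 - γ) := by
        linarith [hopt z₀ hz₀ s a]
    _ = 2 / (1 - γ) * (Φ * ‖w' - z₀‖ + ε) := by ring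

/-- Proposition 1, USFA generalisation bound. -/
theorem statement4 {S A : Type*} [Fintype S] [Fintype A] [Nonempty S] [Nonempty A]
    {d : ℕ} (p : S → A → S → ℝ) (hp : IsKernel p)
    (γ : ℝ) (hγ0 : 0 ≤ γ) (hγ1 : γ < 1)
    (φ : S → A → S → EuclideanSpace ℝ (Fin d)) (w' : EuclideanSpace ℝ (Fin d))
    (C : Finset (EuclideanSpace ℝ (Fin d))) (hC : C.Nonempty)
    (πz : EuclideanSpace ℝ (Fin d) → S → A)
    (hopt : ∀ z ∈ C, ∀ s a, Qpol p γ (πz z) (rTask φ z) s a = Qstar p γ (rTask φ z) s a)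
    (ψt : EuclideanSpace ℝ (Fin d) → S → A → EuclideanSpace ℝ (Fin d))
    (π : S → A)
    (hGPI : ∀ s a, (C.sup' hC fun z => ⟪ψt z s a, w'⟫) ≤
      C.sup' hC fun z => ⟪ψt z s (π s), w'⟫) :
    ∀ s a, |Qstar p γ (rTask φ w') s a - Qpol p γ π (rTask φ w') s a| ≤
      2 / (1 - γ) *
        ((C.inf' hC fun z => (⨆ s, ⨆ a, ⨆ s', ‖φ s a s'‖) * ‖w' - z‖) +
          C.sup' hC fun z =>
            ‖w'‖ * (⨆ s, ⨆ a, ‖SF p γ (πz z) φ s a - ψt z s a‖)) :=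
  statement4_general p hp γ hγ0 hγ1 φ w' C hC πz hopt ψt π hGPI
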